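/- arXiv:2011.11935 — 2 statements merged into one kernel-verified Lean document; each statement's English description precedes it below -/
import Mathlib

section
/- (Serre) Fix an integer k ≥ 1. For each ε > 0 there exists a positive constant c = c(k, ε) such that for any k-regular finite simple graph G of order n, the number of eigenvalues of G (counted with multiplicity) that are larger than (2-ε)·√(k-1) is at least c·n. -/
open scoped Classical

/-- The adjacency matrix of a simple graph, over `ℝ`. -/
noncomputable def adjMat {V : Type*} [Fintype V] (G : SimpleGraph V) : Matrix V V ℝ :=
  Matrix.of fun i j => if G.Adj i j then (1 : ℝ) else 0

/-- The smallest (real) eigenvalue of a matrix. -/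
noncomputable def matMinEig {V : Type*} [Fintype V] (A : Matrix V V ℝ) : ℝ :=
  sInf {μ : ℝ | ∃ v : V → ℝ, v ≠ 0 ∧ A.mulVec v = μ • v}

/-- The smallest eigenvalue of a graph. -/
noncomputable def minEig {V : Type*} [Fintype V] (G : SimpleGraph V) : ℝ :=
  matMinEig (adjMat G)

/-- The degree (valency) of a vertex. -/
noncomputable def deg {V : Type*} [Fintype V] (G : SimpleGraph V) (v : V) : ℕ :=
  (G.neighborSet v).ncard

lemma adjMat_isHermitian {V : Type*} [Fintype V] (G : SimpleGraph V) :
    (adjMat G).IsHermitian := by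
  unfold Matrix.IsHermitian
  ext i j
  simp only [Matrix.conjTranspose_apply, adjMat, Matrix.of_apply, star_trivial]
  rw [SimpleGraph.adj_comm]

/-!
Around a vertex `v` take the vector equal to `q ^ m` on the sphere of radius `m ≤ R` (and `q` at
`v` itself), with `q = 1 / √(k - 1)`. In a `k`-regular graph a vertex at distance `m ≥ 1` has at
most `k - 1` neighbours at distance `m + 1`, so the Laplacian form `∑_{i ~ j} (x i - x j) ^ 2`
only sees consecutive spheres and the Rayleigh quotient of this vector is at least
`2√(k - 1) - (k - 1) / R`. Vectors centred at vertices more than `2R + 1` apart are orthogonal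
both for the dot product and for the adjacency form, and a greedy choice yields at least
`n / (k + 1) ^ (2R + 1)` such centres. By the min-max principle the adjacency matrix has at least
that many eigenvalues above `(2 - ε)√(k - 1)` once `R` is large.
-/

open Finset Matrix

lemma Matrix.sum_smul_dotProduct_sum_smul {R ι n : Type*} [CommSemiring R] [Fintype ι]
    [Fintype n] (c : ι → R) (y z : ι → n → R) (h : Pairwise fun i j => y i ⬝ᵥ z j = 0) :
    (∑ i, c i • y i) ⬝ᵥ ∑ j, c j • z j = ∑ i, c i ^ 2 * (y i ⬝ᵥ z i) := by
  simp_rw [sum_dotProduct, dotProduct_sum, smul_dotProduct, dotProduct_smul]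
  refine sum_congr rfl fun i _ => ?_
  rw [sum_eq_single i (fun j _ hji => by simp [h hji.symm]) (by simp)]
  simp only [smul_eq_mul]
  ring

namespace Matrix.IsHermitian

variable {n : Type*} [Fintype n] [DecidableEq n] {A : Matrix n n ℝ} (hA : A.IsHermitian)

local notation "U" => (hA.eigenvectorUnitary : Matrix n n ℝ)

lemma vecMul_eigenvectorUnitary (x : n → ℝ) : x ᵥ* U = star U *ᵥ x := by
  rw [star_eq_conjTranspose, conjTranspose_eq_transpose_of_trivial, ← vecMul_transpose,
    transpose_transpose]

lemma dotProduct_self_eq_sum_sq (x : n → ℝ) :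
    x ⬝ᵥ x = ∑ i, (star U *ᵥ x) i ^ 2 := by
  have hx : x = U *ᵥ (star U *ᵥ x) := by
    rw [mulVec_mulVec, ← Unitary.coe_star, Unitary.coe_mul_star_self, one_mulVec]
  conv_lhs => rw [hx, dotProduct_mulVec, vecMul_eigenvectorUnitary]
  simp [dotProduct, sq]

lemma dotProduct_mulVec_eq_sum_eigenvalues (x : n → ℝ) :
    x ⬝ᵥ A *ᵥ x = ∑ i, hA.eigenvalues i * (star U *ᵥ x) i ^ 2 := by
  have hdiag : star U * A * U = diagonal hA.eigenvalues := by
    simpa [Unitary.conjStarAlgAut_star_apply] using hA.conjStarAlgAut_star_eigenvectorUnitary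
  have hA' : U * diagonal hA.eigenvalues * star U = A := by
    rw [← hdiag, ← Unitary.coe_star]
    simp only [← mul_assoc, Unitary.coe_mul_star_self, one_mul]
    simp only [mul_assoc, Unitary.coe_mul_star_self, mul_one]
  conv_lhs =>
    rw [← hA', ← mulVec_mulVec, ← mulVec_mulVec, dotProduct_mulVec, vecMul_eigenvectorUnitary]
  simp [dotProduct, mulVec_diagonal, sq, mul_left_comm]

lemma dotProduct_mulVec_le_of_eigenvalues_gt (t : ℝ) {x : n → ℝ}
    (hx : ∀ i, t < hA.eigenvalues i → (star U *ᵥ x) i = 0) :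
    x ⬝ᵥ A *ᵥ x ≤ t * (x ⬝ᵥ x) := by
  rw [hA.dotProduct_mulVec_eq_sum_eigenvalues, hA.dotProduct_self_eq_sum_sq, mul_sum]
  refine sum_le_sum fun i _ => ?_
  by_cases hi : t < hA.eigenvalues i
  · simp [hx i hi]
  · exact mul_le_mul_of_nonneg_right (not_lt.mp hi) (sq_nonneg _)

/-- The form `x ↦ x ⬝ᵥ A *ᵥ x - t * (x ⬝ᵥ x)` is positive definite on the span of the `y i` and
nonpositive on the span of the eigenvectors with eigenvalue `≤ t`, so these subspaces meet only
in `0`. -/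
theorem card_le_card_eigenvalues_gt {ι : Type*} [Fintype ι] (t : ℝ) (y : ι → n → ℝ)
    (horth : Pairwise fun i j => y i ⬝ᵥ y j = 0 ∧ y i ⬝ᵥ A *ᵥ y j = 0)
    (hy : ∀ i, t * (y i ⬝ᵥ y i) < y i ⬝ᵥ A *ᵥ y i) :
    Fintype.card ι ≤ #{i | t < hA.eigenvalues i} := by
  let P : (n → ℝ) →ₗ[ℝ] ({i // t < hA.eigenvalues i} → ℝ) :=
    LinearMap.funLeft ℝ ℝ Subtype.val ∘ₗ (star U).mulVecLin
  have hP : LinearIndependent ℝ (P ∘ y) := by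
    rw [Fintype.linearIndependent_iff]
    intro c hc
    set x := ∑ i, c i • y i
    have hPx : P x = 0 := by simpa [x, map_sum, map_smul] using hc
    have hAx : A *ᵥ x = ∑ i, c i • A *ᵥ y i := by simp [x, mulVec_sum, mulVec_smul]
    have hle := hA.dotProduct_mulVec_le_of_eigenvalues_gt t
      (x := x) fun i hi => congrFun hPx ⟨i, hi⟩
    rw [hAx, sum_smul_dotProduct_sum_smul _ _ _ fun i j hij => (horth hij).2,
      sum_smul_dotProduct_sum_smul _ _ _ fun i j hij => (horth hij).1, mul_sum,
      ← sub_nonpos, ← sum_sub_distrib] at hle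
    have hterm : ∀ i, 0 ≤ c i ^ 2 * (y i ⬝ᵥ A *ᵥ y i) - t * (c i ^ 2 * (y i ⬝ᵥ y i)) := by
      intro i
      nlinarith [hy i, sq_nonneg (c i)]
    intro i
    have hi := (sum_eq_zero_iff_of_nonneg fun i _ => hterm i).mp
      (le_antisymm hle (sum_nonneg fun i _ => hterm i)) i (mem_univ i)
    have : c i ^ 2 * (y i ⬝ᵥ A *ᵥ y i - t * (y i ⬝ᵥ y i)) = 0 := by linarith
    simpa [sub_ne_zero.mpr (hy i).ne'] using this
  simpa [Fintype.card_subtype] using hP.fintype_card_le_finrank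

end Matrix.IsHermitian

theorem Finset.exists_subset_pairwise_not_rel_card_le_mul {α : Type*} [DecidableEq α]
    (r : α → α → Prop) [DecidableRel r] (hrefl : ∀ a, r a a) (hsymm : ∀ a b, r a b → r b a)
    {M : ℕ} (S : Finset α) (hM : ∀ a, #{b ∈ S | r a b} ≤ M) :
    ∃ C ⊆ S, (C : Set α).Pairwise (fun a b => ¬r a b) ∧ #S ≤ #C * M := by
  induction S using Finset.strongInduction with
  | _ S ih =>
    obtain rfl | ⟨a, ha⟩ := S.eq_empty_or_nonempty
    · exact ⟨∅, by simp⟩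
    set N : Finset α := {b ∈ S | r a b}
    have haN : a ∈ N := mem_filter.mpr ⟨ha, hrefl a⟩
    obtain ⟨C, hCS, hC, hcard⟩ := ih (S \ N) (sdiff_ssubset (filter_subset _ _) ⟨a, haN⟩)
      fun b => (card_le_card (filter_subset_filter _ sdiff_subset)).trans (hM b)
    have hfar : ∀ c ∈ C, ¬r a c := fun c hc hac =>
      (mem_sdiff.mp (hCS hc)).2 (mem_filter.mpr ⟨(mem_sdiff.mp (hCS hc)).1, hac⟩)
    refine ⟨insert a C, insert_subset ha (hCS.trans sdiff_subset), ?_, ?_⟩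
    · rw [coe_insert]
      exact hC.insert fun c hc _ => ⟨hfar c hc, fun hca => hfar c hc (hsymm _ _ hca)⟩
    · rw [card_insert_of_notMem fun haC => hfar a haC (hrefl a), add_one_mul]
      calc #S ≤ #(S \ N) + #N := card_le_card_sdiff_add_card
        _ ≤ #C * M + M := add_le_add hcard (hM a)

theorem Finset.sum_sum_eq_two_nsmul_sum_sum_lt {ι α M : Type*} [Fintype ι] [LinearOrder α]
    [AddCommMonoid M] (ℓ : ι → α) (g : ι → ι → M) (hsymm : ∀ i j, g i j = g j i)
    (hlevel : ∀ i j, ℓ i = ℓ j → g i j = 0) :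
    ∑ i, ∑ j, g i j = 2 • ∑ i, ∑ j, if ℓ i < ℓ j then g i j else 0 := by
  have hsplit : ∀ i j, g i j =
      (if ℓ i < ℓ j then g i j else 0) + if ℓ j < ℓ i then g j i else 0 := by
    intro i j
    rcases lt_trichotomy (ℓ i) (ℓ j) with h | h | h
    · simp [h, h.not_gt]
    · simp [h, hlevel i j h]
    · simp [h, h.not_gt, hsymm i j]
  simp_rw [two_nsmul, ← sum_add_distrib]
  conv_lhs => enter [2, i, 2, j]; rw [hsplit i j]
  simp only [sum_add_distrib]
  rw [sum_comm (f := fun i j => if ℓ j < ℓ i then g j i else 0)]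

/-- The centre gets the same weight `q` as the unit sphere, so that the edges at the centre cost
nothing in the Laplacian form. -/
noncomputable def sphereWeight (R : ℕ) (q : ℝ) (m : ℕ∞) : ℝ :=
  if m ≤ R then q ^ max m.toNat 1 else 0

lemma sphereWeight_coe (R : ℕ) (q : ℝ) (m : ℕ) :
    sphereWeight R q m = if m ≤ R then q ^ max m 1 else 0 := by
  simp [sphereWeight]

lemma sphereWeight_zero {R : ℕ} (hR : 1 ≤ R) (q : ℝ) :
    sphereWeight R q 0 = sphereWeight R q 1 := by
  simp [sphereWeight, hR]

lemma sq_sphereWeight_sub_le (R : ℕ) (q : ℝ) {m : ℕ} (hm : 1 ≤ m) :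
    (sphereWeight R q m - sphereWeight R q (m + 1)) ^ 2 ≤
      (1 - q) ^ 2 * sphereWeight R q m ^ 2 + if m = R then sphereWeight R q m ^ 2 else 0 := by
  rw [← Nat.cast_succ, sphereWeight_coe, sphereWeight_coe, max_eq_left hm,
    max_eq_left (by omega : 1 ≤ m + 1)]
  rcases lt_trichotomy m R with hmR | rfl | hmR
  · simp only [if_pos hmR.le, if_pos (Nat.succ_le_of_lt hmR), if_neg hmR.ne]
    exact le_of_eq (by ring)
  · simp only [le_refl, if_true, Nat.not_succ_le_self, if_false]
    nlinarith [sq_nonneg ((1 - q) * q ^ m)]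
  · simp [hmR.not_ge, (hmR.trans (Nat.lt_succ_self m)).not_ge]

lemma adjMat_eq_adjMatrix {V : Type*} [Fintype V] (G : SimpleGraph V) :
    adjMat G = G.adjMatrix ℝ := by
  ext i j
  simp [adjMat, SimpleGraph.adjMatrix_apply]

lemma deg_eq_degree {V : Type*} [Fintype V] (G : SimpleGraph V) (v : V) :
    deg G v = G.degree v := by
  rw [deg, Set.ncard_eq_toFinset_card', ← SimpleGraph.neighborFinset_def,
    SimpleGraph.card_neighborFinset_eq_degree]

namespace SimpleGraph

variable {V : Type*} {G : SimpleGraph V} {u v w : V}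

lemma Adj.edist_le_edist_add_one (h : G.Adj u w) : G.edist v w ≤ G.edist v u + 1 := by
  simpa [edist_eq_one_iff_adj.mpr h] using G.edist_triangle (u := v) (v := u) (w := w)

lemma Adj.lt_edist_iff {m : ℕ} (h : G.Adj u w) (hu : G.edist v u = m) :
    m < G.edist v w ↔ G.edist v w = m + 1 :=
  ⟨fun hlt => le_antisymm (hu ▸ h.edist_le_edist_add_one)
      ((ENat.add_one_le_iff (ENat.natCast_ne_top m)).mpr hlt),
    fun heq => by rw [heq]; exact_mod_cast Nat.lt_succ_self m⟩

lemma edist_eq_add_one_of_le_add_one_of_not_le {m : ℕ} (h : G.edist v u ≤ m + 1)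
    (h' : ¬G.edist v u ≤ m) : G.edist v u = m + 1 :=
  le_antisymm h ((ENat.add_one_le_iff (ENat.natCast_ne_top m)).mpr (not_le.mp h'))

lemma exists_adj_edist_eq_of_edist_eq_add_one {m : ℕ} (h : G.edist v u = m + 1) :
    ∃ w, G.Adj w u ∧ G.edist v w = m := by
  obtain ⟨p, hp⟩ := exists_walk_of_edist_eq_coe (k := m + 1) (by exact_mod_cast h)
  have hnil : ¬p.Nil := by simp [← Walk.length_eq_zero_iff, hp]
  refine ⟨p.penultimate, p.adj_penultimate hnil, le_antisymm ?_ ?_⟩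
  · simpa [Walk.length_dropLast, hp] using edist_le p.dropLast
  · have := h ▸ (p.adj_penultimate hnil).edist_le_edist_add_one (v := v)
    exact (ENat.add_le_add_iff_right ENat.one_ne_top).mp this

noncomputable def sphereVec (G : SimpleGraph V) (v : V) (R : ℕ) (q : ℝ) : V → ℝ :=
  fun u => sphereWeight R q (G.edist v u)

lemma edist_le_of_sphereVec_ne_zero {R : ℕ} {q : ℝ} (h : G.sphereVec v R q u ≠ 0) :
    G.edist v u ≤ R := by
  by_contra hc
  exact h (if_neg hc)

lemma sphereVec_self (v : V) (R : ℕ) (q : ℝ) : G.sphereVec v R q v = q := by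
  simp [sphereVec, sphereWeight]

variable [Fintype V] {k : ℕ}

lemma dotProduct_sphereVec_self_pos (v : V) (R : ℕ) {q : ℝ} (hq : q ≠ 0) :
    0 < G.sphereVec v R q ⬝ᵥ G.sphereVec v R q := by
  simpa using (dotProduct_star_self_pos_iff (v := G.sphereVec v R q)).mpr
    (Function.ne_iff.mpr ⟨v, by simpa [sphereVec_self] using hq⟩)

lemma card_neighborFinset_filter_edist_eq_add_one_le {m : ℕ} (hm : 1 ≤ m)
    (hu : G.edist v u = m) :
    #{w ∈ G.neighborFinset u | G.edist v w = m + 1} ≤ G.degree u - 1 := by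
  obtain ⟨m, rfl⟩ : ∃ m', m = m' + 1 := ⟨m - 1, by omega⟩
  obtain ⟨w', hw'u, hw'⟩ := exists_adj_edist_eq_of_edist_eq_add_one (by exact_mod_cast hu)
  have hsub : {w ∈ G.neighborFinset u | G.edist v w = ↑(m + 1) + 1} ⊆
      (G.neighborFinset u).erase w' := by
    intro w hw
    simp only [mem_filter] at hw
    refine mem_erase.mpr ⟨?_, hw.1⟩
    rintro rfl
    rw [hw'] at hw
    norm_cast at hw
    omega
  calc _ ≤ #((G.neighborFinset u).erase w') := card_le_card hsub
    _ = G.degree u - 1 := by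
      rw [card_erase_of_mem ((mem_neighborFinset _ _ _).mpr hw'u.symm),
        card_neighborFinset_eq_degree]

lemma card_edist_eq_add_one_le_sum (m : ℕ) :
    #{u | G.edist v u = m + 1} ≤
      ∑ w ∈ {w | G.edist v w = m}, #{u ∈ G.neighborFinset w | G.edist v u = m + 1} := by
  refine (card_le_card fun u hu => ?_).trans card_biUnion_le
  obtain ⟨w, hwu, hw⟩ := exists_adj_edist_eq_of_edist_eq_add_one (mem_filter.mp hu).2
  exact mem_biUnion.mpr ⟨w, by simpa using hw, by simpa [hwu] using (mem_filter.mp hu).2⟩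

lemma IsRegularOfDegree.card_edist_eq_add_one_le (hG : G.IsRegularOfDegree k) {m : ℕ}
    (hm : 1 ≤ m) : #{u | G.edist v u = m + 1} ≤ (k - 1) * #{u | G.edist v u = m} := by
  refine (card_edist_eq_add_one_le_sum m).trans ?_
  rw [mul_comm, ← smul_eq_mul, ← sum_const]
  refine sum_le_sum fun w hw => ?_
  simpa [hG w] using card_neighborFinset_filter_edist_eq_add_one_le hm (mem_filter.mp hw).2

lemma IsRegularOfDegree.card_edist_eq_le_pow_mul (hG : G.IsRegularOfDegree k) {m m' : ℕ}
    (hm : 1 ≤ m) (hmm' : m ≤ m') :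
    #{u | G.edist v u = m'} ≤ (k - 1) ^ (m' - m) * #{u | G.edist v u = m} := by
  induction m', hmm' using Nat.le_induction with
  | base => simp
  | succ m' hmm' ih =>
    calc #{u | G.edist v u = ↑(m' + 1)} ≤ (k - 1) * #{u | G.edist v u = m'} := by
          simpa using hG.card_edist_eq_add_one_le (hm.trans hmm')
      _ ≤ (k - 1) * ((k - 1) ^ (m' - m) * #{u | G.edist v u = m}) := Nat.mul_le_mul_left _ ih
      _ = (k - 1) ^ (m' + 1 - m) * #{u | G.edist v u = m} := by
          rw [← mul_assoc, ← pow_succ', Nat.sub_add_comm hmm']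

lemma IsRegularOfDegree.card_edist_le_le (hG : G.IsRegularOfDegree k) (v : V) (D : ℕ) :
    #{u | G.edist v u ≤ D} ≤ (k + 1) ^ D := by
  induction D with
  | zero => simp [edist_eq_zero_iff, filter_eq]
  | succ D ih =>
    have hsub : ({u | G.edist v u ≤ ↑(D + 1)} : Finset V) ⊆
        ({u | G.edist v u ≤ D} : Finset V).biUnion fun w => insert w (G.neighborFinset w) := by
      intro u hu
      rw [mem_filter, Nat.cast_succ] at hu
      by_cases hD : G.edist v u ≤ D
      · exact mem_biUnion.mpr ⟨u, by simpa using hD, mem_insert_self _ _⟩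
      · obtain ⟨w, hwu, hw⟩ := exists_adj_edist_eq_of_edist_eq_add_one
          (edist_eq_add_one_of_le_add_one_of_not_le hu.2 hD)
        exact mem_biUnion.mpr ⟨w, by simp [hw], by simp [hwu]⟩
    calc _ ≤ #({u | G.edist v u ≤ D} : Finset V) * (k + 1) := by
          refine (card_le_card hsub).trans (card_biUnion_le_card_mul _ _ _ fun w _ => ?_)
          exact (card_insert_le _ _).trans (by rw [card_neighborFinset_eq_degree, hG w])
      _ ≤ (k + 1) ^ (D + 1) := by rw [pow_succ]; exact Nat.mul_le_mul_right _ ih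

lemma dotProduct_adjMatrix_mulVec_eq_zero {α : Type*} [NonAssocSemiring α] {y z : V → α}
    (h : ∀ u w, y u ≠ 0 → z w ≠ 0 → ¬G.Adj u w) : y ⬝ᵥ G.adjMatrix α *ᵥ z = 0 := by
  rw [dotProduct_mulVec_adjMatrix]
  refine sum_eq_zero fun u _ => sum_eq_zero fun w _ => ?_
  by_cases hyu : y u = 0
  · simp [hyu]
  by_cases hzw : z w = 0
  · simp [hzw]
  simp [h u w hyu hzw]

lemma dotProduct_eq_zero_and_dotProduct_adjMatrix_mulVec_eq_zero {α : Type*}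
    [NonAssocSemiring α] {R : ℕ} {c c' : V} (hcc' : ¬G.edist c c' ≤ 2 * R + 1) {y z : V → α}
    (hy : ∀ u, y u ≠ 0 → G.edist c u ≤ R) (hz : ∀ u, z u ≠ 0 → G.edist c' u ≤ R) :
    y ⬝ᵥ z = 0 ∧ y ⬝ᵥ G.adjMatrix α *ᵥ z = 0 := by
  have hfar : ∀ u w, y u ≠ 0 → z w ≠ 0 → ¬(G.Adj u w ∨ u = w) := by
    intro u w hyu hzw huw
    refine hcc' ?_
    calc G.edist c c' ≤ G.edist c w + G.edist w c' := G.edist_triangle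
      _ ≤ G.edist c u + G.edist u w + G.edist w c' := by gcongr; exact G.edist_triangle
      _ ≤ R + 1 + R := by
          gcongr
          · exact hy u hyu
          · exact edist_le_one_iff_adj_or_eq.mpr huw
          · rw [edist_comm]; exact hz w hzw
      _ = ↑(2 * R + 1) := by push_cast; ring
  refine ⟨sum_eq_zero fun u _ => ?_, dotProduct_adjMatrix_mulVec_eq_zero
    fun u w hyu hzw hadj => hfar u w hyu hzw (Or.inl hadj)⟩
  by_cases hyu : y u = 0
  · simp [hyu]
  by_cases hzu : z u = 0
  · simp [hzu]
  exact absurd (Or.inr rfl) (hfar u u hyu hzu)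

theorem IsRegularOfDegree.card_le_card_eigenvalues_gt_mul (hG : G.IsRegularOfDegree k) (t : ℝ)
    (R : ℕ) (y : V → V → ℝ) (hsupp : ∀ c u, y c u ≠ 0 → G.edist c u ≤ R)
    (hy : ∀ c, t * (y c ⬝ᵥ y c) < y c ⬝ᵥ adjMat G *ᵥ y c) :
    Fintype.card V ≤ #{i | t < (adjMat_isHermitian G).eigenvalues i} * (k + 1) ^ (2 * R + 1) := by
  obtain ⟨C, -, hC, hcard⟩ := Finset.exists_subset_pairwise_not_rel_card_le_mul
    (fun c c' => G.edist c c' ≤ ↑(2 * R + 1)) (fun c => by simp)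
    (fun c c' h => by rwa [edist_comm]) univ
    fun c => by simpa using hG.card_edist_le_le c (2 * R + 1)
  have hCcard : Fintype.card C ≤ #{i | t < (adjMat_isHermitian G).eigenvalues i} :=
    (adjMat_isHermitian G).card_le_card_eigenvalues_gt t (fun c => y c)
      (fun c c' hcc' => by
        rw [adjMat_eq_adjMatrix]
        exact dotProduct_eq_zero_and_dotProduct_adjMatrix_mulVec_eq_zero
          (hC c.2 c'.2 (Subtype.coe_ne_coe.mpr hcc')) (hsupp c) (hsupp c'))
      fun c => hy c
  rw [Fintype.card_coe] at hCcard
  simpa using hcard.trans (Nat.mul_le_mul_right _ hCcard)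

lemma IsRegularOfDegree.dotProduct_adjMatrix_mulVec_self (hG : G.IsRegularOfDegree k)
    (x : V → ℝ) : x ⬝ᵥ G.adjMatrix ℝ *ᵥ x =
      k * (x ⬝ᵥ x) - (∑ i, ∑ j, if G.Adj i j then (x i - x j) ^ 2 else 0) / 2 := by
  rw [← lapMatrix_toLinearMap₂', toLinearMap₂'_apply', lapMatrix, sub_mulVec,
    dotProduct_sub, dotProduct_mulVec_degMatrix]
  simp [hG _, dotProduct, mul_sum, mul_assoc]

lemma IsRegularOfDegree.sum_edist_lt_sq_sphereVec_sub_le (hG : G.IsRegularOfDegree k) {R : ℕ}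
    (hR : 1 ≤ R) (q : ℝ) (v i : V) :
    ∑ j, (if G.edist v i < G.edist v j then
        (if G.Adj i j then (G.sphereVec v R q i - G.sphereVec v R q j) ^ 2 else 0) else 0) ≤
      ((k - 1 : ℕ) : ℝ) * ((1 - q) ^ 2 * G.sphereVec v R q i ^ 2 +
        if G.edist v i = R then G.sphereVec v R q i ^ 2 else 0) := by
  set x := G.sphereVec v R q
  have hrhs : 0 ≤ ((k - 1 : ℕ) : ℝ) * ((1 - q) ^ 2 * x i ^ 2 +
      if G.edist v i = R then x i ^ 2 else 0) := by
    refine mul_nonneg (Nat.cast_nonneg _) (add_nonneg (by positivity) ?_)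
    split_ifs <;> positivity
  induction hd : G.edist v i using ENat.recTopCoe with
  | top => simpa [hd] using hrhs
  | coe m =>
    rw [hd] at hrhs
    have hterm : ∀ j, (if (m : ℕ∞) < G.edist v j then
        (if G.Adj i j then (x i - x j) ^ 2 else 0) else 0) =
        if j ∈ {w ∈ G.neighborFinset i | G.edist v w = m + 1} then
          (sphereWeight R q m - sphereWeight R q (m + 1)) ^ 2 else 0 := by
      intro j
      by_cases hij : G.Adj i j
      · simp only [hij.lt_edist_iff hd, hij, if_true, mem_filter, mem_neighborFinset, true_and]
        split_ifs with h
        · simp only [x, sphereVec, hd, h]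
        · rfl
      · simp [hij]
    simp only [hterm, sum_ite_mem, univ_inter, sum_const, nsmul_eq_mul]
    rcases Nat.eq_zero_or_pos m with rfl | hm
    · simpa [sphereWeight_zero hR] using hrhs
    calc _ ≤ ((k - 1 : ℕ) : ℝ) * (sphereWeight R q m - sphereWeight R q (m + 1)) ^ 2 := by
          refine mul_le_mul_of_nonneg_right ?_ (sq_nonneg _)
          exact_mod_cast (hG i) ▸ card_neighborFinset_filter_edist_eq_add_one_le hm hd
      _ ≤ _ := by
          refine mul_le_mul_of_nonneg_left ?_ (Nat.cast_nonneg _)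
          simpa [x, sphereVec, hd] using sq_sphereWeight_sub_le R q hm

/-- The mass of the sphere of radius `m` is nonincreasing for `m ≥ 1`, so the outermost sphere
carries at most a `1 / R` share of the total. -/
lemma IsRegularOfDegree.mul_sum_sq_sphereVec_edist_eq_le (hG : G.IsRegularOfDegree k) (R : ℕ)
    {q : ℝ} (hqk : ((k - 1 : ℕ) : ℝ) * q ^ 2 ≤ 1) (v : V) :
    R * ∑ u ∈ {u | G.edist v u = R}, G.sphereVec v R q u ^ 2 ≤
      G.sphereVec v R q ⬝ᵥ G.sphereVec v R q := by
  set x := G.sphereVec v R q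
  set L : ℕ → ℝ := fun m => ∑ u ∈ {u | G.edist v u = m}, x u ^ 2
  have hL : ∀ m ∈ Icc 1 R, L m = #{u | G.edist v u = m} * (q ^ m) ^ 2 := by
    intro m hm
    rw [mem_Icc] at hm
    rw [← nsmul_eq_mul, ← sum_const]
    refine sum_congr rfl fun u hu => ?_
    simp [x, sphereVec, (mem_filter.mp hu).2, sphereWeight_coe, hm.2, max_eq_left hm.1]
  have hmono : ∀ m ∈ Icc 1 R, L R ≤ L m := by
    intro m hm
    have hcard : (#{u | G.edist v u = R} : ℝ) ≤
        ((k - 1 : ℕ) : ℝ) ^ (R - m) * #{u | G.edist v u = m} := by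
      exact_mod_cast hG.card_edist_eq_le_pow_mul (mem_Icc.mp hm).1 (mem_Icc.mp hm).2
    have hpow : ((k - 1 : ℕ) : ℝ) ^ (R - m) * (q ^ R) ^ 2 ≤ (q ^ m) ^ 2 := by
      calc _ = (((k - 1 : ℕ) : ℝ) * q ^ 2) ^ (R - m) * (q ^ m) ^ 2 := by
            rw [← Nat.sub_add_cancel (mem_Icc.mp hm).2]; simp only [Nat.add_sub_cancel]; ring
        _ ≤ 1 * (q ^ m) ^ 2 := by
            gcongr
            exact pow_le_one₀ (by positivity) hqk
        _ = (q ^ m) ^ 2 := one_mul _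
    rw [hL R (right_mem_Icc.mpr ((mem_Icc.mp hm).1.trans (mem_Icc.mp hm).2)), hL m hm]
    calc _ ≤ ((k - 1 : ℕ) : ℝ) ^ (R - m) * #{u | G.edist v u = m} * (q ^ R) ^ 2 := by
          gcongr
      _ ≤ #{u | G.edist v u = m} * (q ^ m) ^ 2 := by
          rw [mul_comm _ (#_ : ℝ), mul_assoc]; gcongr
  calc (R : ℝ) * L R = ∑ _m ∈ Icc 1 R, L R := by simp
    _ ≤ ∑ m ∈ Icc 1 R, L m := sum_le_sum hmono
    _ = ∑ m ∈ (Icc 1 R).image ((↑) : ℕ → ℕ∞), ∑ u ∈ {u | G.edist v u = m}, x u ^ 2 :=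
        (sum_image (f := fun m : ℕ∞ => ∑ u ∈ {u | G.edist v u = m}, x u ^ 2)
          fun _ _ _ _ h => Nat.cast_injective h).symm
    _ ≤ ∑ u, x u ^ 2 := sum_fiberwise_le_sum_of_sum_fiber_nonneg fun _ _ =>
        sum_nonneg fun _ _ => sq_nonneg _
    _ = x ⬝ᵥ x := by simp [dotProduct, sq]

lemma IsRegularOfDegree.le_dotProduct_adjMatrix_mulVec_sphereVec (hG : G.IsRegularOfDegree k)
    {R : ℕ} (hR : 1 ≤ R) {q : ℝ} (hqk : ((k - 1 : ℕ) : ℝ) * q ^ 2 ≤ 1) (v : V) :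
    (k - ((k - 1 : ℕ) : ℝ) * (1 - q) ^ 2 - ((k - 1 : ℕ) : ℝ) / R) *
        (G.sphereVec v R q ⬝ᵥ G.sphereVec v R q) ≤
      G.sphereVec v R q ⬝ᵥ G.adjMatrix ℝ *ᵥ G.sphereVec v R q := by
  set x := G.sphereVec v R q
  set S := ∑ u ∈ {u | G.edist v u = R}, x u ^ 2
  have hforward : (∑ i, ∑ j, if G.edist v i < G.edist v j then
      (if G.Adj i j then (x i - x j) ^ 2 else 0) else 0) ≤
      ((k - 1 : ℕ) : ℝ) * (1 - q) ^ 2 * (x ⬝ᵥ x) + ((k - 1 : ℕ) : ℝ) * S := by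
    calc _ ≤ ∑ i, ((k - 1 : ℕ) : ℝ) * ((1 - q) ^ 2 * x i ^ 2 +
          if G.edist v i = R then x i ^ 2 else 0) :=
          sum_le_sum fun i _ => hG.sum_edist_lt_sq_sphereVec_sub_le hR q v i
      _ = _ := by
          simp only [mul_add, sum_add_distrib, ← mul_sum, mul_ite, mul_zero, sum_ite,
            sum_const_zero, add_zero, S, dotProduct, ← sq, mul_assoc]
  have hS : ((k - 1 : ℕ) : ℝ) * S ≤ ((k - 1 : ℕ) : ℝ) / R * (x ⬝ᵥ x) := by
    rw [div_mul_eq_mul_div, le_div_iff₀ (by exact_mod_cast hR), mul_assoc]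
    gcongr
    linarith [hG.mul_sum_sq_sphereVec_edist_eq_le R hqk v]
  rw [hG.dotProduct_adjMatrix_mulVec_self, sum_sum_eq_two_nsmul_sum_sum_lt (G.edist v)]
  · rw [two_nsmul]
    linarith
  · intro i j
    simp only [G.adj_comm i j]
    split_ifs <;> ring
  · intro i j hij
    simp [x, sphereVec, hij]

end SimpleGraph

/-- For `k ≥ 2` take `q = 1 / √(k - 1)`, which turns `k - (k - 1) * (1 - q) ^ 2` into
`2√(k - 1)`; for `k = 1` any `q ≠ 0` works. -/
lemma exists_sphereWeight_rayleigh_gt {k : ℕ} (hk : 1 ≤ k) {ε : ℝ} (hε : 0 < ε) :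
    ∃ (q : ℝ) (R : ℕ), q ≠ 0 ∧ ((k - 1 : ℕ) : ℝ) * q ^ 2 ≤ 1 ∧ 1 ≤ R ∧
      (2 - ε) * √((k : ℝ) - 1) < k - ((k - 1 : ℕ) : ℝ) * (1 - q) ^ 2 - ((k - 1 : ℕ) : ℝ) / R := by
  rcases hk.eq_or_lt with rfl | hk2
  · exact ⟨1, 1, one_ne_zero, by simp, le_rfl, by norm_num⟩
  set s := √((k : ℝ) - 1)
  have hk1 : ((k - 1 : ℕ) : ℝ) = k - 1 := by rw [Nat.cast_sub hk, Nat.cast_one]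
  have hs : 0 < s := Real.sqrt_pos.mpr (by linarith [(Nat.one_lt_cast (α := ℝ)).mpr hk2])
  have hs2 : s ^ 2 = k - 1 := Real.sq_sqrt (by linarith [(Nat.one_lt_cast (α := ℝ)).mpr hk2])
  obtain ⟨R, hR⟩ := exists_nat_gt (((k : ℝ) - 1) / (ε * s))
  have hRpos : (0 : ℝ) < R := lt_trans (by rw [← hs2]; positivity) hR
  refine ⟨s⁻¹, R, inv_ne_zero hs.ne', ?_, by exact_mod_cast hRpos, ?_⟩
  · rw [hk1, ← hs2, inv_pow, mul_inv_cancel₀ (by positivity)]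
  · have hgap : ((k : ℝ) - 1) / R < ε * s := by
      rwa [div_lt_iff₀ hRpos, mul_comm, ← div_lt_iff₀ (by positivity)]
    have hkey : (k : ℝ) - (k - 1) * (1 - s⁻¹) ^ 2 = 2 * s := by
      have hss : s * s⁻¹ = 1 := mul_inv_cancel₀ hs.ne'
      rw [← hs2]
      linear_combination (2 * s - s * s⁻¹ - 1) * hss - hs2
    rw [hk1, hkey]
    linarith

/-- **Serre.** Fix `k ≥ 1`. For each `ε > 0` there is `c = c(k,ε) > 0` such that any
`k`-regular graph of order `n` has at least `c·n` eigenvalues (with multiplicity)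
larger than `(2 - ε)√(k-1)`. -/
theorem stmt3 (k : ℕ) (hk : 1 ≤ k) (ε : ℝ) (hε : 0 < ε) :
    ∃ c : ℝ, 0 < c ∧ ∀ (n : ℕ) (G : SimpleGraph (Fin n)),
      (∀ v, deg G v = k) →
      c * (n : ℝ) ≤
        ((Finset.univ.filter fun i =>
          (2 - ε) * Real.sqrt ((k : ℝ) - 1) < (adjMat_isHermitian G).eigenvalues i).card : ℝ) := by
  obtain ⟨q, R, hq, hqk, hR, hgap⟩ := exists_sphereWeight_rayleigh_gt hk hε
  refine ⟨((k + 1 : ℝ) ^ (2 * R + 1))⁻¹, by positivity, fun n G hdeg => ?_⟩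
  have hG : G.IsRegularOfDegree k := fun v => (deg_eq_degree G v).symm.trans (hdeg v)
  have hcard := hG.card_le_card_eigenvalues_gt_mul _ R (fun c => G.sphereVec c R q)
    (fun _ _ => SimpleGraph.edist_le_of_sphereVec_ne_zero) fun c => by
      rw [adjMat_eq_adjMatrix]
      exact (mul_lt_mul_of_pos_right hgap (G.dotProduct_sphereVec_self_pos c R hq)).trans_le
        (hG.le_dotProduct_adjMatrix_mulVec_sphereVec hR hqk c)
  rw [inv_mul_le_iff₀ (by positivity), mul_comm]
  exact_mod_cast (Fintype.card_fin n).symm.trans_le hcard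
end

section
/- (Hoffman) For any real number λ ∈ (-2, -1], there exists a constant C₁(λ) such that: if G is a finite simple graph with smallest eigenvalue λ_min(G) ≥ λ and minimal valency at least C₁(λ), then λ_min(G) = -1 and G is a disjoint union of cliques (i.e., every connected component of G is a complete graph). -/
open scoped Classical

/-!
Write `ε = λ_min + 2 > 0`. The Rayleigh inequality `λ_min ‖w‖² ≤ wᵀ A w`, applied to vectors that
are constant on a few disjoint vertex sets, forbids: an independent 4-set in a neighbourhood
(`K_{1,4}` has `λ_min = -2`); a clique of size `≳ 1/ε` in the common neighbourhood of two
non-adjacent vertices; and, around an edge or a vertex, two cliques of size `≳ 1/ε` that are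
(almost) not joined to each other. Since neighbourhoods have independence number at most `3`,
Ramsey's theorem turns a large minimal degree into large cliques inside neighbourhoods, and
around an induced path `x - y - z` these cliques always produce one of the forbidden
configurations. Hence `G` has no induced path on three vertices, i.e. it is a disjoint union of
cliques; then `A + 1 = B Bᵀ` for the vertex-component incidence matrix `B`, so `λ_min = -1`.
-/

open Finset Matrix Function

section Spectrum

variable {n : Type*} [Fintype n]

theorem Matrix.mem_spectrum_iff_exists_mulVec_eq_smul [DecidableEq n] {A : Matrix n n ℝ}
    {μ : ℝ} : μ ∈ spectrum ℝ A ↔ ∃ v : n → ℝ, v ≠ 0 ∧ A *ᵥ v = μ • v := by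
  rw [← spectrum_toLin', ← Module.End.hasEigenvalue_iff_mem_spectrum]
  constructor
  · intro h
    obtain ⟨v, hv⟩ := h.exists_hasEigenvector
    exact ⟨v, hv.2, by simpa using Module.End.mem_eigenspace_iff.1 hv.1⟩
  · rintro ⟨v, hv, hAv⟩
    exact Module.End.hasEigenvalue_of_hasEigenvector
      ⟨Module.End.mem_eigenspace_iff.2 (by simpa using hAv), hv⟩

theorem Matrix.IsHermitian.mul_dotProduct_self_le [DecidableEq n] {A : Matrix n n ℝ}
    (hA : A.IsHermitian) {μ : ℝ} (hμ : ∀ ν ∈ spectrum ℝ A, μ ≤ ν) (w : n → ℝ) :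
    μ * (w ⬝ᵥ w) ≤ w ⬝ᵥ A *ᵥ w := by
  have hpsd : (A - algebraMap ℝ _ μ).PosSemidef := by
    refine posSemidef_iff_isHermitian_and_spectrum_nonneg.2 ⟨?_, ?_⟩
    · exact hA.sub (by simp [algebraMap_eq_diagonal])
    · rw [← spectrum.sub_singleton_eq]
      rintro _ ⟨ν, hν, _, rfl, rfl⟩
      simpa using hμ ν hν
  have := hpsd.dotProduct_mulVec_nonneg w
  simp only [star_trivial, sub_mulVec, dotProduct_sub, Algebra.algebraMap_eq_smul_one, smul_mulVec,
    one_mulVec, dotProduct_smul, smul_eq_mul] at this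
  linarith

theorem matMinEig_eq_sInf_spectrum (A : Matrix n n ℝ) : matMinEig A = sInf (spectrum ℝ A) := by
  unfold matMinEig
  congr 1
  ext μ
  exact mem_spectrum_iff_exists_mulVec_eq_smul.symm

theorem Matrix.IsHermitian.matMinEig_mul_dotProduct_self_le {A : Matrix n n ℝ}
    (hA : A.IsHermitian) (w : n → ℝ) : matMinEig A * (w ⬝ᵥ w) ≤ w ⬝ᵥ A *ᵥ w := by
  have hfin : (spectrum ℝ A).Finite := by
    rw [hA.spectrum_real_eq_range_eigenvalues]
    exact Set.finite_range _
  rw [matMinEig_eq_sInf_spectrum]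
  exact hA.mul_dotProduct_self_le (fun ν hν => csInf_le hfin.bddBelow hν) w

theorem matMinEig_eq_of_mulVec_eq_smul {A : Matrix n n ℝ} {μ : ℝ} {v : n → ℝ} (hv : v ≠ 0)
    (hAv : A *ᵥ v = μ • v) (hμ : ∀ w, μ * (w ⬝ᵥ w) ≤ w ⬝ᵥ A *ᵥ w) : matMinEig A = μ := by
  refine IsLeast.csInf_eq ⟨⟨v, hv, hAv⟩, ?_⟩
  rintro ν ⟨u, hu, hAu⟩
  have hpos : 0 < u ⬝ᵥ u := lt_of_le_of_ne (sum_nonneg fun i _ => mul_self_nonneg _)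
    (Ne.symm (mt dotProduct_self_eq_zero.1 hu))
  have := hμ u
  rw [hAu, dotProduct_smul, smul_eq_mul] at this
  exact le_of_mul_le_mul_right this hpos

end Spectrum

theorem Finset.card_sub_card_sdiff_sub_card_inter_le {α : Type*} [DecidableEq α]
    (K A B : Finset α) : #K - #(K \ A) - #(A ∩ B) ≤ #((K ∩ A) \ B) := by
  have := card_sdiff_add_card_inter K A
  have := card_sdiff_add_card_inter (K ∩ A) B
  have := card_le_card (inter_subset_inter_right inter_subset_right : K ∩ A ∩ B ⊆ A ∩ B)
  omega

namespace SimpleGraph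

section

variable {V : Type*} {G : SimpleGraph V}

theorem card_interedges_comm (S T : Finset V) : #(G.interedges S T) = #(G.interedges T S) :=
  have : Std.Symm G.Adj := ⟨fun _ _ => Adj.symm⟩
  Rel.card_interedges_comm S T

theorem card_interedges_singleton_left (x : V) (T : Finset V) [Fintype (G.neighborSet x)] :
    #(G.interedges {x} T) = #(T ∩ G.neighborFinset x) := by
  rw [interedges_def, singleton_product, filter_map, card_map]
  congr 1; ext; simp

theorem card_interedges_singleton_right (S : Finset V) (y : V) [Fintype (G.neighborSet y)] :
    #(G.interedges S {y}) = #(S ∩ G.neighborFinset y) := by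
  rw [interedges_def, product_singleton, filter_map, card_map]
  congr 1; ext; simp [adj_comm]

theorem card_interedges_of_forall_adj {S T : Finset V} (h : ∀ i ∈ S, ∀ j ∈ T, G.Adj i j) :
    #(G.interedges S T) = #S * #T := by
  rw [interedges_def, filter_true_of_mem fun e he =>
    h _ (mem_product.1 he).1 _ (mem_product.1 he).2, card_product]

theorem card_interedges_le_of_forall [Fintype V] {S T : Finset V} {r : ℕ}
    (h : ∀ j ∈ T, #(S ∩ G.neighborFinset j) ≤ r) : #(G.interedges S T) ≤ r * #T :=
  calc #(G.interedges S T)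
      = #(T.biUnion fun j => G.interedges S {j}) := by
        rw [← interedges_biUnion_right, biUnion_singleton_eq_self]
    _ ≤ ∑ j ∈ T, #(G.interedges S {j}) := card_biUnion_le
    _ ≤ ∑ _j ∈ T, r :=
        sum_le_sum fun j hj => (card_interedges_singleton_right S j).trans_le (h j hj)
    _ = r * #T := by rw [sum_const, smul_eq_mul, mul_comm]

theorem IsClique.natCast_card_interedges_self {K : Finset V} (hK : G.IsClique (K : Set V)) :
    (#(G.interedges K K) : ℝ) = #K * #K - #K := by
  have : G.interedges K K = K.offDiag := by
    ext ⟨i, j⟩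
    simp only [mem_interedges_iff, mem_offDiag]
    exact ⟨fun h => ⟨h.1, h.2.1, h.2.2.ne⟩, fun h => ⟨h.1, h.2.1, hK h.1 h.2.1 h.2.2⟩⟩
  rw [this, offDiag_card, Nat.cast_sub (Nat.le_mul_self _), Nat.cast_mul]

theorem IsIndepSet.interedges_self_eq_empty {I : Finset V} (hI : G.IsIndepSet (I : Set V)) :
    G.interedges I I = ∅ := by
  ext ⟨i, j⟩
  simp only [mem_interedges_iff, notMem_empty, iff_false, not_and]
  exact fun hi hj hij => hI hi hj hij.ne hij

theorem singleton_inter_neighborFinset_self (x : V) [Fintype (G.neighborSet x)] :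
    {x} ∩ G.neighborFinset x = ∅ :=
  singleton_inter_of_notMem (G.notMem_neighborFinset_self x)

theorem notMem_of_subset_neighborFinset {x : V} {S : Finset V} [Fintype (G.neighborSet x)]
    (h : S ⊆ G.neighborFinset x) : x ∉ S :=
  fun hx => G.irrefl ((mem_neighborFinset _ _ _).1 (h hx))

theorem exists_isNClique_of_choose_le_card [DecidableEq V] [DecidableRel G.Adj] {t k : ℕ}
    {S : Finset V} (hS : ∀ I ⊆ S, G.IsIndepSet (I : Set V) → #I ≤ t)
    (hcard : (t + k).choose t ≤ #S) :
    ∃ K ⊆ S, G.IsNClique k K := by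
  induction t generalizing k S with
  | zero =>
    obtain ⟨v, hv⟩ : S.Nonempty := card_pos.1 (by simpa using hcard)
    simpa using hS {v} (singleton_subset_iff.2 hv) (by simp [isIndepSet_iff])
  | succ t iht =>
    induction k generalizing S with
    | zero => exact ⟨∅, empty_subset _, by simp⟩
    | succ k ihk =>
      obtain ⟨v, hv⟩ : S.Nonempty := card_pos.1 ((Nat.choose_pos (by omega)).trans_le hcard)
      have hsplit := card_filter_add_card_filter_not (s := S) (G.Adj v)
      have hv' : v ∈ S.filter (¬G.Adj v ·) := mem_filter.2 ⟨hv, G.irrefl⟩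
      rw [← card_erase_add_one hv'] at hsplit
      rw [show t + 1 + (k + 1) = t + 1 + k + 1 by ring, Nat.choose_succ_succ'] at hcard
      by_cases hbig : (t + 1 + k).choose (t + 1) ≤ #(S.filter (G.Adj v))
      · obtain ⟨K, hKS, hK⟩ := ihk (fun I hI => hS I (hI.trans (filter_subset _ _))) hbig
        refine ⟨insert v K, insert_subset hv (hKS.trans (filter_subset _ _)), hK.insert ?_⟩
        exact fun b hb => (mem_filter.1 (hKS hb)).2
      · have hS₂ : (t + (k + 1)).choose t ≤ #((S.filter (¬G.Adj v ·)).erase v) := by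
          rw [show t + (k + 1) = t + 1 + k by ring]
          omega
        have hsub : (S.filter (¬G.Adj v ·)).erase v ⊆ S :=
          (erase_subset _ _).trans (filter_subset _ _)
        refine iht (fun I hI hind => ?_) hS₂ |>.imp fun K hK => ⟨hK.1.trans hsub, hK.2⟩
        have hvI : v ∉ I := fun h => (mem_erase.1 (hI h)).1 rfl
        have := hS (insert v I) (insert_subset hv (hI.trans hsub)) <| by
          rw [coe_insert, isIndepSet_iff, Set.pairwise_insert]
          refine ⟨hind, fun b hb _ => ?_⟩
          have hvb := (mem_filter.1 (mem_of_mem_erase (hI hb))).2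
          exact ⟨hvb, fun h => hvb h.symm⟩
        rw [card_insert_of_notMem hvI] at this
        omega

theorem adj_of_reachable_of_ne (hG : ∀ ⦃x y z : V⦄, G.Adj y x → G.Adj y z → x ≠ z → G.Adj x z)
    {x y : V} (hxy : G.Reachable x y) (hne : x ≠ y) : G.Adj x y := by
  obtain ⟨q⟩ := hxy
  induction q with
  | nil => exact absurd rfl hne
  | @cons u v w huv q ih =>
    by_cases hvw : v = w
    · exact hvw ▸ huv
    · exact hG huv.symm (ih hvw) hne

end

section

variable {V : Type*} [Fintype V] {G : SimpleGraph V}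

theorem isHermitian_adjMat (G : SimpleGraph V) : (adjMat G).IsHermitian := by
  ext i j
  simp [adjMat, G.adj_comm]

theorem minEig_mul_dotProduct_self_le (w : V → ℝ) :
    minEig G * (w ⬝ᵥ w) ≤ w ⬝ᵥ adjMat G *ᵥ w :=
  (isHermitian_adjMat G).matMinEig_mul_dotProduct_self_le w

variable (G) in
noncomputable def componentIndicator : Matrix V G.ConnectedComponent ℝ :=
  of fun i c => if G.connectedComponentMk i = c then 1 else 0

theorem adjMat_add_one_eq_componentIndicator_mul
    (hG : ∀ x y, G.Reachable x y → x ≠ y → G.Adj x y) :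
    adjMat G + 1 = G.componentIndicator * G.componentIndicatorᴴ := by
  ext i j
  simp only [Matrix.add_apply, adjMat, of_apply, Matrix.one_apply, mul_apply, conjTranspose_apply,
    componentIndicator, star_trivial]
  rw [sum_eq_single (G.connectedComponentMk i)]
  · by_cases hij : i = j
    · subst hij; simp
    · by_cases h : G.Reachable i j
      · simp [hG i j h hij, hij, ConnectedComponent.eq.2 h.symm]
      · simp [hij, mt ConnectedComponent.eq.1 (mt Reachable.symm h), mt Adj.reachable h]
  · intro c _ hc
    simp [Ne.symm hc]
  · simp

theorem neg_one_mul_dotProduct_self_le (hG : ∀ x y, G.Reachable x y → x ≠ y → G.Adj x y)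
    (w : V → ℝ) : -1 * (w ⬝ᵥ w) ≤ w ⬝ᵥ adjMat G *ᵥ w := by
  have := (posSemidef_self_mul_conjTranspose G.componentIndicator).dotProduct_mulVec_nonneg w
  rw [← adjMat_add_one_eq_componentIndicator_mul hG, add_mulVec, one_mulVec,
    dotProduct_add] at this
  simp only [star_trivial] at this
  linarith

theorem adjMat_mulVec_single_sub_single (hG : ∀ x y, G.Reachable x y → x ≠ y → G.Adj x y)
    {u v : V} (huv : G.Reachable u v) :
    adjMat G *ᵥ (Pi.single u 1 - Pi.single v 1) = (-1 : ℝ) • (Pi.single u 1 - Pi.single v 1) := by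
  have hker : G.componentIndicatorᴴ *ᵥ (Pi.single u 1 - Pi.single v 1) = 0 := by
    ext c
    simp [mulVec_sub, componentIndicator, ConnectedComponent.eq.2 huv]
  have := congrArg (G.componentIndicator *ᵥ ·) hker
  simp only [mulVec_mulVec, ← adjMat_add_one_eq_componentIndicator_mul hG, add_mulVec,
    one_mulVec, mulVec_zero] at this
  rw [neg_one_smul]
  exact eq_neg_of_add_eq_zero_left this

theorem minEig_eq_neg_one (hG : ∀ x y, G.Reachable x y → x ≠ y → G.Adj x y) {u v : V}
    (huv : G.Adj u v) : minEig G = -1 := by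
  refine matMinEig_eq_of_mulVec_eq_smul ?_ (adjMat_mulVec_single_sub_single hG huv.reachable)
    (neg_one_mul_dotProduct_self_le hG)
  rw [sub_ne_zero]
  intro h
  simpa [G.ne_of_adj huv] using congrFun h u

theorem indicator_dotProduct_adjMat_mulVec_indicator (S T : Finset V) :
    (S : Set V).indicator 1 ⬝ᵥ adjMat G *ᵥ (T : Set V).indicator 1 =
      (#(G.interedges S T) : ℝ) := by
  rw [interedges_def, card_filter, sum_product]
  simp [dotProduct, mulVec, adjMat, Set.indicator_apply]

theorem _root_.Finset.indicator_dotProduct_indicator (S T : Finset V) :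
    (S : Set V).indicator (1 : V → ℝ) ⬝ᵥ (T : Set V).indicator 1 = #(S ∩ T) := by
  simp [dotProduct, Set.indicator_apply, ← ite_and, ← mem_inter, inter_comm T]

theorem minEig_mul_sum_sq_mul_card_le {ι : Type*} [Fintype ι] (P : ι → Finset V) (c : ι → ℝ)
    (hP : Pairwise (Disjoint on P)) :
    minEig G * ∑ a, c a ^ 2 * #(P a) ≤ ∑ a, ∑ b, c a * c b * #(G.interedges (P a) (P b)) := by
  convert minEig_mul_dotProduct_self_le (G := G) (∑ a, c a • (P a : Set V).indicator 1) using 1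
  · simp only [sum_dotProduct, dotProduct_sum, smul_dotProduct, dotProduct_smul,
      indicator_dotProduct_indicator, smul_eq_mul]
    congr 1
    refine sum_congr rfl fun a _ => ?_
    rw [sum_eq_single a]
    · rw [inter_self]; ring
    · intro b _ hba
      simp [disjoint_iff_inter_eq_empty.1 (hP hba)]
    · simp
  · simp only [sum_dotProduct, dotProduct_sum, mulVec_sum, mulVec_smul, smul_dotProduct,
      dotProduct_smul, indicator_dotProduct_adjMat_mulVec_indicator, smul_eq_mul]
    rw [sum_comm]
    simp only [mul_sum]
    refine sum_congr rfl fun a _ => sum_congr rfl fun b _ => ?_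
    ring

theorem minEig_le_neg_two_of_isIndepSet {y : V} {I : Finset V} (hI : G.IsIndepSet (I : Set V))
    (hIy : I ⊆ G.neighborFinset y) (hcard : #I = 4) : minEig G ≤ -2 := by
  have h := minEig_mul_sum_sq_mul_card_le (G := G) ![{y}, I] ![2, -1]
    (by simp [pairwise_fin_succ_iff_of_isSymm, onFun, notMem_of_subset_neighborFinset hIy])
  simp only [Fin.sum_univ_two, Fin.isValue, cons_val_zero, cons_val_one, cons_val_fin_one,
    card_singleton, hcard, card_interedges_singleton_left, card_interedges_singleton_right,
    inter_eq_left.2 hIy, hI.interedges_self_eq_empty, G.singleton_inter_neighborFinset_self, card_empty,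
    Nat.cast_ofNat, Nat.cast_one, Nat.cast_zero] at h
  linarith

theorem minEig_add_two_mul_le_of_isClique {x z : V} {K : Finset V} (hxz : x ≠ z)
    (hnxz : ¬G.Adj x z) (hK : G.IsClique (K : Set V)) (hKne : K.Nonempty)
    (hKx : K ⊆ G.neighborFinset x) (hKz : K ⊆ G.neighborFinset z) :
    (minEig G + 2) * (#K + 2) ≤ 2 := by
  have hxNz : x ∉ G.neighborFinset z := by simpa [adj_comm] using hnxz
  have hzNx : z ∉ G.neighborFinset x := by simpa using hnxz
  have h := minEig_mul_sum_sq_mul_card_le (G := G) ![{x}, {z}, K] ![(#K : ℝ), #K, -2]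
    (by simp [pairwise_fin_succ_iff_of_isSymm, Fin.forall_fin_succ, onFun, hxz,
      notMem_of_subset_neighborFinset hKx, notMem_of_subset_neighborFinset hKz])
  simp only [Fin.sum_univ_three, Fin.isValue, cons_val_zero, cons_val_one, Matrix.cons_val,
    card_singleton, card_interedges_singleton_left, card_interedges_singleton_right,
    G.singleton_inter_neighborFinset_self, singleton_inter_of_notMem hxNz,
    singleton_inter_of_notMem hzNx, inter_eq_left.2 hKx, inter_eq_left.2 hKz,
    hK.natCast_card_interedges_self, card_empty, Nat.cast_one, Nat.cast_zero] at h
  have hk : (1 : ℝ) ≤ #K := by exact_mod_cast hKne.card_pos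
  nlinarith

theorem minEig_le_neg_nine_div_four {x z : V} {K₁ K₂ : Finset V} (hxz : x ≠ z)
    (hnxz : ¬G.Adj x z) (hK₁ : G.IsNClique 3 K₁) (hK₂ : G.IsNClique 3 K₂)
    (hK₁₂ : ∀ i ∈ K₁, ∀ j ∈ K₂, G.Adj i j) (hK₁x : K₁ ⊆ G.neighborFinset x)
    (hK₁z : Disjoint K₁ (G.neighborFinset z)) (hK₂z : K₂ ⊆ G.neighborFinset z)
    (hK₂x : Disjoint K₂ (G.neighborFinset x)) : minEig G ≤ -9 / 4 := by
  have hxNz : x ∉ G.neighborFinset z := by simpa [adj_comm] using hnxz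
  have hzNx : z ∉ G.neighborFinset x := by simpa using hnxz
  have hxK₂ : x ∉ K₂ := fun h => hnxz (G.adj_symm ((mem_neighborFinset _ _ _).1 (hK₂z h)))
  have hzK₁ : z ∉ K₁ := fun h => hnxz ((mem_neighborFinset _ _ _).1 (hK₁x h))
  have hK₁K₂ : Disjoint K₁ K₂ := Finset.disjoint_left.2 fun i hi₁ hi₂ => G.irrefl (hK₁₂ i hi₁ i hi₂)
  have h := minEig_mul_sum_sq_mul_card_le (G := G) ![{x}, {z}, K₁, K₂] ![1, -1, -1, 1]
    (by simp [pairwise_fin_succ_iff_of_isSymm, Fin.forall_fin_succ, onFun, hxz, hxK₂, hzK₁, hK₁K₂,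
      notMem_of_subset_neighborFinset hK₁x, notMem_of_subset_neighborFinset hK₂z])
  simp only [Fin.sum_univ_four, Fin.isValue, cons_val_zero, cons_val_one, Matrix.cons_val,
    card_singleton, card_interedges_singleton_left, card_interedges_singleton_right,
    G.singleton_inter_neighborFinset_self, singleton_inter_of_notMem hxNz,
    singleton_inter_of_notMem hzNx, inter_eq_left.2 hK₁x, inter_eq_left.2 hK₂z,
    disjoint_iff_inter_eq_empty.1 hK₁z, disjoint_iff_inter_eq_empty.1 hK₂x,
    hK₁.1.natCast_card_interedges_self, hK₂.1.natCast_card_interedges_self,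
    card_interedges_of_forall_adj hK₁₂,
    card_interedges_of_forall_adj fun i hi j hj => (hK₁₂ j hj i hi).symm, hK₁.2, hK₂.2,
    card_empty, Nat.cast_one, Nat.cast_zero, Nat.cast_ofNat, Nat.cast_mul] at h
  linarith

theorem minEig_le_neg_nine_div_four_of_isClique {x z : V} {K : Finset V} (hxz : x ≠ z)
    (hnxz : ¬G.Adj x z) (hK : G.IsClique (K : Set V))
    (hx : 3 ≤ #((K ∩ G.neighborFinset x) \ G.neighborFinset z))
    (hz : 3 ≤ #((K ∩ G.neighborFinset z) \ G.neighborFinset x)) : minEig G ≤ -9 / 4 := by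
  obtain ⟨K₁, hK₁, hK₁card⟩ := exists_subset_card_eq hx
  obtain ⟨K₂, hK₂, hK₂card⟩ := exists_subset_card_eq hz
  have hK₁K : K₁ ⊆ K := hK₁.trans (sdiff_subset.trans inter_subset_left)
  have hK₂K : K₂ ⊆ K := hK₂.trans (sdiff_subset.trans inter_subset_left)
  refine minEig_le_neg_nine_div_four hxz hnxz
    ⟨hK.subset (coe_subset.2 hK₁K), hK₁card⟩ ⟨hK.subset (coe_subset.2 hK₂K), hK₂card⟩
    (fun i hi j hj => hK (hK₁K hi) (hK₂K hj) fun hij =>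
      (mem_sdiff.1 (hK₁ hi)).2 (hij ▸ (mem_inter.1 (mem_sdiff.1 (hK₂ hj)).1).2))
    (hK₁.trans (sdiff_subset.trans inter_subset_right)) (disjoint_of_subset_left hK₁ sdiff_disjoint)
    (hK₂.trans (sdiff_subset.trans inter_subset_right)) (disjoint_of_subset_left hK₂ sdiff_disjoint)

theorem minEig_add_two_mul_le_of_card_interedges_le {y : V} {L K : Finset V} {p r : ℕ}
    (hL : G.IsNClique p L) (hK : G.IsNClique p K) (hp : 0 < p) (hLy : L ⊆ G.neighborFinset y)
    (hKy : K ⊆ G.neighborFinset y) (hLK : Disjoint L K) (hr : #(G.interedges L K) ≤ r * p) :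
    (minEig G + 2) * (p + 2) ≤ 2 * (r + 1) := by
  have h := minEig_mul_sum_sq_mul_card_le (G := G) ![{y}, L, K] ![(p : ℝ), -1, -1]
    (by simp [pairwise_fin_succ_iff_of_isSymm, Fin.forall_fin_succ, onFun, hLK,
      notMem_of_subset_neighborFinset hLy, notMem_of_subset_neighborFinset hKy])
  have hKL : #(G.interedges K L) ≤ r * p := (card_interedges_comm K L).trans_le hr
  simp only [Fin.sum_univ_three, Fin.isValue, cons_val_zero, cons_val_one, Matrix.cons_val,
    card_singleton, card_interedges_singleton_left, card_interedges_singleton_right,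
    G.singleton_inter_neighborFinset_self, inter_eq_left.2 hLy, inter_eq_left.2 hKy,
    hL.1.natCast_card_interedges_self, hK.1.natCast_card_interedges_self, hL.2, hK.2,
    card_empty, Nat.cast_one, Nat.cast_zero] at h
  have hp' : (1 : ℝ) ≤ p := by exact_mod_cast hp
  have hr' : (#(G.interedges L K) : ℝ) ≤ r * p := by exact_mod_cast hr
  have hr'' : (#(G.interedges K L) : ℝ) ≤ r * p := by exact_mod_cast hKL
  nlinarith

theorem minEig_add_two_mul_le_of_adj {x y : V} {L K : Finset V} {p : ℕ} (hxy : G.Adj x y)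
    (hL : G.IsNClique p L) (hK : G.IsNClique p K) (hp : 0 < p)
    (hLx : L ⊆ G.neighborFinset x) (hLy : Disjoint L (G.neighborFinset y)) (hyL : y ∉ L)
    (hKy : K ⊆ G.neighborFinset y) (hKx : Disjoint K (G.neighborFinset x)) (hxK : x ∉ K) :
    (minEig G + 2) * (p + 1) ≤ 1 := by
  have hxNy : x ∈ G.neighborFinset y := by simpa using hxy.symm
  have hyNx : y ∈ G.neighborFinset x := by simpa using hxy
  have hLK : Disjoint L K := disjoint_of_subset_left hLx hKx.symm
  have h := minEig_mul_sum_sq_mul_card_le (G := G) ![{x}, {y}, L, K] ![(p : ℝ), -p, -1, 1]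
    (by simp [pairwise_fin_succ_iff_of_isSymm, Fin.forall_fin_succ, onFun, hLK, hyL, hxK, hxy.ne,
      notMem_of_subset_neighborFinset hLx, notMem_of_subset_neighborFinset hKy])
  simp only [Fin.sum_univ_four, Fin.isValue, cons_val_zero, cons_val_one, Matrix.cons_val,
    card_singleton, card_interedges_singleton_left, card_interedges_singleton_right,
    G.singleton_inter_neighborFinset_self, singleton_inter_of_mem hxNy,
    singleton_inter_of_mem hyNx, inter_eq_left.2 hLx, inter_eq_left.2 hKy,
    disjoint_iff_inter_eq_empty.1 hLy, disjoint_iff_inter_eq_empty.1 hKx,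
    hL.1.natCast_card_interedges_self, hK.1.natCast_card_interedges_self, hL.2, hK.2,
    card_empty, Nat.cast_one, Nat.cast_zero] at h
  have hp' : (1 : ℝ) ≤ p := by exact_mod_cast hp
  have h₁ : (0 : ℝ) ≤ #(G.interedges L K) := by positivity
  have h₂ : (0 : ℝ) ≤ #(G.interedges K L) := by positivity
  nlinarith

theorem card_le_three_of_isIndepSet (hG : -2 < minEig G) {y : V} {I : Finset V}
    (hIy : I ⊆ G.neighborFinset y) (hI : G.IsIndepSet (I : Set V)) : #I ≤ 3 := by
  by_contra! h
  obtain ⟨J, hJI, hJ⟩ := exists_subset_card_eq (show 4 ≤ #I from h)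
  exact hG.not_ge <|
    minEig_le_neg_two_of_isIndepSet (hI.mono (coe_subset.2 hJI)) (hJI.trans hIy) hJ

theorem exists_isNClique_of_subset_neighborFinset (hG : -2 < minEig G) {y : V} {S : Finset V}
    (hSy : S ⊆ G.neighborFinset y) {k : ℕ} (hS : (3 + k).choose 3 ≤ #S) :
    ∃ K ⊆ S, G.IsNClique k K :=
  exists_isNClique_of_choose_le_card
    (fun _ hI => card_le_three_of_isIndepSet hG (hI.trans hSy)) hS

theorem card_inter_neighborFinset_lt {k : ℕ} (hk : 2 < (minEig G + 2) * k) {a b : V}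
    (hab : a ≠ b) (hnab : ¬G.Adj a b) :
    #(G.neighborFinset a ∩ G.neighborFinset b) < (3 + k).choose 3 := by
  have hG : 0 < minEig G + 2 := pos_of_mul_pos_left (two_pos.trans hk) k.cast_nonneg
  by_contra! h
  obtain ⟨K, hKab, hK⟩ :=
    exists_isNClique_of_subset_neighborFinset (by linarith) inter_subset_left h
  have hKne : K.Nonempty := by
    rw [← card_pos, hK.2, ← Nat.cast_pos (α := ℝ)]
    exact pos_of_mul_pos_right (two_pos.trans hk) hG.le
  have := minEig_add_two_mul_le_of_isClique hab hnab hK.1 hKne (hKab.trans inter_subset_left)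
    (hKab.trans inter_subset_right)
  rw [hK.2] at this
  nlinarith

theorem card_sdiff_neighborFinset_lt {r p : ℕ}
    (hr : ∀ a b, a ≠ b → ¬G.Adj a b → #(G.neighborFinset a ∩ G.neighborFinset b) ≤ r)
    (hp : 2 * (r + 1) < (minEig G + 2) * p) {x y : V} (hxy : G.Adj x y) {K L : Finset V}
    (hK : G.IsClique (K : Set V)) (hKy : K ⊆ G.neighborFinset y) (hxK : x ∉ K)
    (hL : G.IsClique (L : Set V)) (hLcard : 2 * p ≤ #L) (hLx : L ⊆ G.neighborFinset x)
    (hyL : y ∉ L) : #(K \ G.neighborFinset x) < p := by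
  have hrp : 0 < (minEig G + 2) * p := (by positivity : (0 : ℝ) < 2 * (r + 1)).trans hp
  have hG : 0 < minEig G + 2 := pos_of_mul_pos_left hrp p.cast_nonneg
  have hp0 : 0 < p := Nat.cast_pos.1 (pos_of_mul_pos_right hrp hG.le)
  by_contra! hKcard
  obtain ⟨K', hK'K, hK'⟩ := exists_subset_card_eq hKcard
  have hK'y : K' ⊆ G.neighborFinset y := hK'K.trans (sdiff_subset.trans hKy)
  have hK'x : Disjoint K' (G.neighborFinset x) := disjoint_of_subset_left hK'K sdiff_disjoint
  have hK'clique : G.IsNClique p K' := ⟨hK.subset (coe_subset.2 (hK'K.trans sdiff_subset)), hK'⟩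
  -- Either `p` vertices of `L` see `y`, giving two cliques in `N(y)` that are sparsely joined
  -- through `x`, or `p` vertices of `L` miss `y`, giving two cliques hanging off the edge `xy`.
  by_cases hLy : p ≤ #(L ∩ G.neighborFinset y)
  · obtain ⟨L', hL'L, hL'⟩ := exists_subset_card_eq hLy
    have hsparse : #(G.interedges L' K') ≤ r * p := by
      rw [← hK']
      refine card_interedges_le_of_forall fun j hj => ?_
      have hjx : ¬G.Adj x j := fun h =>
        Finset.disjoint_left.1 hK'x hj ((mem_neighborFinset _ _ _).2 h)
      refine (card_le_card (inter_subset_inter_right ?_)).trans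
        (hr x j (fun h => hxK (h ▸ sdiff_subset (hK'K hj))) hjx)
      exact hL'L.trans (inter_subset_left.trans hLx)
    have := minEig_add_two_mul_le_of_card_interedges_le
      ⟨hL.subset (coe_subset.2 (hL'L.trans inter_subset_left)), hL'⟩ hK'clique hp0
      (hL'L.trans inter_subset_right) hK'y
      (disjoint_of_subset_left (hL'L.trans (inter_subset_left.trans hLx)) hK'x.symm) hsparse
    nlinarith
  · obtain ⟨L', hL'L, hL'⟩ := exists_subset_card_eq (show p ≤ #(L \ G.neighborFinset y) by
      have := card_sdiff_add_card_inter L (G.neighborFinset y)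
      omega)
    have := minEig_add_two_mul_le_of_adj hxy
      ⟨hL.subset (coe_subset.2 (hL'L.trans sdiff_subset)), hL'⟩ hK'clique hp0
      (hL'L.trans (sdiff_subset.trans hLx)) (disjoint_of_subset_left hL'L sdiff_disjoint)
      (fun h => hyL (sdiff_subset (hL'L h))) hK'y hK'x (fun h => hxK (sdiff_subset (hK'K h)))
    nlinarith

theorem exists_isNClique_subset_neighborFinset_sdiff (hG : -2 < minEig G) {v : V} {M : ℕ}
    (T : Finset V) (hdeg : (3 + M).choose 3 + #T ≤ G.degree v) :
    ∃ K ⊆ G.neighborFinset v \ T, G.IsNClique M K :=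
  exists_isNClique_of_subset_neighborFinset hG sdiff_subset <| by
    have := le_card_sdiff T (G.neighborFinset v)
    rw [card_neighborFinset_eq_degree] at this
    omega

theorem adj_of_adj_of_adj {k p : ℕ} (hk : 2 < (minEig G + 2) * k)
    (hp : 2 * ((3 + k).choose 3 + 1) < (minEig G + 2) * p)
    (hdeg : ∀ v, (3 + (2 * p + (3 + k).choose 3 + 3)).choose 3 + 2 ≤ G.degree v)
    {x y z : V} (hyx : G.Adj y x) (hyz : G.Adj y z) (hxz : x ≠ z) : G.Adj x z := by
  set r := (3 + k).choose 3
  set M := 2 * p + r + 3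
  have hG : -2 < minEig G := by
    have := pos_of_mul_pos_left (two_pos.trans hk) k.cast_nonneg
    linarith
  by_contra hnxz
  have hr : ∀ a b, a ≠ b → ¬G.Adj a b → #(G.neighborFinset a ∩ G.neighborFinset b) ≤ r :=
    fun a b hab h => (card_inter_neighborFinset_lt hk hab h).le
  obtain ⟨K, hKy, hK⟩ := exists_isNClique_subset_neighborFinset_sdiff (v := y) (M := M) hG {x, z}
    (by have := hdeg y; have := card_le_two (a := x) (b := z); omega)
  obtain ⟨Lx, hLx, hLxM⟩ := exists_isNClique_subset_neighborFinset_sdiff (v := x) (M := M) hG {y}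
    (by have := hdeg x; rw [card_singleton]; omega)
  obtain ⟨Lz, hLz, hLzM⟩ := exists_isNClique_subset_neighborFinset_sdiff (v := z) (M := M) hG {y}
    (by have := hdeg z; rw [card_singleton]; omega)
  have hKx := card_sdiff_neighborFinset_lt hr hp hyx.symm hK.1
    (hKy.trans sdiff_subset) (fun h => (mem_sdiff.1 (hKy h)).2 (by simp)) hLxM.1
    (by rw [hLxM.2]; omega)
    (hLx.trans sdiff_subset) (fun h => (mem_sdiff.1 (hLx h)).2 (mem_singleton_self y))
  have hKz := card_sdiff_neighborFinset_lt hr hp hyz.symm hK.1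
    (hKy.trans sdiff_subset) (fun h => (mem_sdiff.1 (hKy h)).2 (by simp)) hLzM.1
    (by rw [hLzM.2]; omega)
    (hLz.trans sdiff_subset) (fun h => (mem_sdiff.1 (hLz h)).2 (mem_singleton_self y))
  have := minEig_le_neg_nine_div_four_of_isClique hxz hnxz hK.1
    (by
      have := card_sub_card_sdiff_sub_card_inter_le K (G.neighborFinset x) (G.neighborFinset z)
      have := hr x z hxz hnxz
      have := hK.2
      omega)
    (by
      have := card_sub_card_sdiff_sub_card_inter_le K (G.neighborFinset z) (G.neighborFinset x)
      have := hr z x hxz.symm fun h => hnxz h.symm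
      have := hK.2
      omega)
  linarith

theorem deg_eq_degree (v : V) : deg G v = G.degree v := by
  rw [deg, ← card_neighborFinset_eq_degree, Set.ncard_eq_toFinset_card']
  rfl

end

end SimpleGraph

theorem stmt6_general (lam : ℝ) (h1 : -2 < lam) :
    ∃ C : ℝ, ∀ (n : ℕ) (G : SimpleGraph (Fin n)), 0 < n →
      lam ≤ minEig G → (∀ v, C ≤ (deg G v : ℝ)) →
      minEig G = -1 ∧ ∀ x y : Fin n, G.Reachable x y → x ≠ y → G.Adj x y := by
  have hε : 0 < lam + 2 := by linarith
  obtain ⟨k, hk⟩ := exists_nat_gt (2 / (lam + 2))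
  obtain ⟨p, hp⟩ := exists_nat_gt (2 * ((3 + k).choose 3 + 1) / (lam + 2))
  set C := (3 + (2 * p + (3 + k).choose 3 + 3)).choose 3 + 2
  refine ⟨C, fun n G hn hlam hdeg => ?_⟩
  have hdeg' (v : Fin n) : C ≤ G.degree v := by
    exact_mod_cast SimpleGraph.deg_eq_degree (G := G) v ▸ hdeg v
  have hmono (m : ℕ) : (lam + 2) * m ≤ (minEig G + 2) * m :=
    mul_le_mul_of_nonneg_right (by linarith) m.cast_nonneg
  have hcl : ∀ x y, G.Reachable x y → x ≠ y → G.Adj x y := fun _ _ =>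
    SimpleGraph.adj_of_reachable_of_ne fun _ _ _ => SimpleGraph.adj_of_adj_of_adj
      (((div_lt_iff₀' hε).1 hk).trans_le (hmono k)) (((div_lt_iff₀' hε).1 hp).trans_le (hmono p))
      hdeg'
  obtain ⟨u, hu⟩ : (G.neighborFinset ⟨0, hn⟩).Nonempty := by
    rw [← card_pos, SimpleGraph.card_neighborFinset_eq_degree]
    exact lt_of_lt_of_le (by omega) (hdeg' ⟨0, hn⟩)
  exact ⟨SimpleGraph.minEig_eq_neg_one hcl ((G.mem_neighborFinset _ _).1 hu), hcl⟩

/-- **Hoffman.** For every real `λ ∈ (-2, -1]` there is a constant `C₁(λ)` such that any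
(nonempty) graph with smallest eigenvalue at least `λ` and minimum degree at least
`C₁(λ)` has smallest eigenvalue exactly `-1` and is a disjoint union of cliques
(any two distinct vertices in the same connected component are adjacent). -/
theorem stmt6 (lam : ℝ) (h1 : -2 < lam) (h2 : lam ≤ -1) :
    ∃ C : ℝ, ∀ (n : ℕ) (G : SimpleGraph (Fin n)), 0 < n →
      lam ≤ minEig G → (∀ v, C ≤ (deg G v : ℝ)) →
      minEig G = -1 ∧ ∀ x y : Fin n, G.Reachable x y → x ≠ y → G.Adj x y :=
  stmt6_general lam h1
end
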